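/- Let V be a finite-dimensional real vector space, D ⊆ V × V* a Lagrangian subspace with respect to the pairing ⟨(u,α),(v,β)⟩ = β(u) + α(v), and R ⊆ V a subspace. Then (D ∩ (R × V*))^⊥ = D + ({0} × R°), where R° is the annihilator of R in V*. -/

import Mathlib

open Module

/-! For a nondegenerate reflexive form on a finite-dimensional space, `W ↦ W^⊥` is an
order-reversing involution of the subspace lattice, so it turns `⊓` into `⊔`. Hence
`(D ⊓ (R × V*))^⊥ = D^⊥ ⊔ (R × V*)^⊥`, and it remains to use `D^⊥ = D` and
`(R × V*)^⊥ = 0 × R°`. -/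

/-- The Pontryagin pairing `⟨(u,α),(v,β)⟩ = β(u) + α(v)` on `V × V*`. -/
noncomputable def pontryaginPair (V : Type*) [AddCommGroup V] [Module ℝ V] :
    LinearMap.BilinForm ℝ (V × Module.Dual ℝ V) :=
  LinearMap.mk₂ ℝ (fun p q => q.2 p.1 + p.2 q.1)
    (by intro p p' q; simp; ring)
    (by intro c p q; simp; ring)
    (by intro p q q'; simp; ring)
    (by intro c p q; simp; ring)

namespace LinearMap.BilinForm

lemma orthogonal_sup {R M : Type*} [CommRing R] [AddCommGroup M] [Module R M]
    (B : LinearMap.BilinForm R M) (A C : Submodule R M) :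
    B.orthogonal (A ⊔ C) = B.orthogonal A ⊓ B.orthogonal C := by
  refine le_antisymm (le_inf (B.orthogonal_le le_sup_left) (B.orthogonal_le le_sup_right)) ?_
  rintro x ⟨hA, hC⟩ n hn
  obtain ⟨a, ha, c, hc, rfl⟩ := Submodule.mem_sup.mp hn
  rw [map_add, LinearMap.add_apply, hA a ha, hC c hc, add_zero]

lemma orthogonal_inf {K V : Type*} [Field K] [AddCommGroup V] [Module K V]
    [FiniteDimensional K V] {B : LinearMap.BilinForm K V} (hB : B.Nondegenerate) (hB₀ : B.IsRefl)
    (A C : Submodule K V) :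
    B.orthogonal (A ⊓ C) = B.orthogonal A ⊔ B.orthogonal C := by
  conv_lhs => rw [← orthogonal_orthogonal hB hB₀ A, ← orthogonal_orthogonal hB hB₀ C,
    ← orthogonal_sup]
  exact orthogonal_orthogonal hB hB₀ _

end LinearMap.BilinForm

section Pontryagin

variable {V : Type*} [AddCommGroup V] [Module ℝ V]

lemma pontryaginPair_apply (p q : V × Module.Dual ℝ V) :
    pontryaginPair V p q = q.2 p.1 + p.2 q.1 := rfl

lemma pontryaginPair_zero_left (φ : Module.Dual ℝ V) (p : V × Module.Dual ℝ V) :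
    pontryaginPair V (0, φ) p = φ p.1 := by
  simp [pontryaginPair_apply]

lemma pontryaginPair_zero_right (u : V) (p : V × Module.Dual ℝ V) :
    pontryaginPair V (u, 0) p = p.2 u := by
  simp [pontryaginPair_apply]

lemma pontryaginPair_isSymm : (pontryaginPair V).IsSymm :=
  LinearMap.BilinForm.isSymm_def.mpr fun p q => by
    simp only [pontryaginPair_apply]
    ring

lemma pontryaginPair_nondegenerate : (pontryaginPair V).Nondegenerate := by
  refine (LinearMap.IsRefl.nondegenerate_iff_separatingRight
    (pontryaginPair_isSymm (V := V)).isRefl).mpr fun p hp => ?_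
  have hp₁ : p.1 = 0 := (Module.forall_dual_apply_eq_zero_iff ℝ p.1).mp fun φ => by
    simpa only [pontryaginPair_zero_left] using hp (0, φ)
  have hp₂ : p.2 = 0 := LinearMap.ext fun u => by
    simpa only [pontryaginPair_zero_right, LinearMap.zero_apply] using hp (u, 0)
  exact Prod.ext hp₁ hp₂

lemma pontryaginPair_orthogonal_prod_top (R : Submodule ℝ V) :
    (pontryaginPair V).orthogonal (R.prod ⊤) = (⊥ : Submodule ℝ V).prod R.dualAnnihilator := by
  ext p
  simp only [LinearMap.BilinForm.mem_orthogonal_iff, Submodule.mem_prod, Submodule.mem_top,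
    and_true, Submodule.mem_bot, Submodule.mem_dualAnnihilator]
  constructor
  · intro h
    refine ⟨(Module.forall_dual_apply_eq_zero_iff ℝ p.1).mp fun φ => ?_, fun u hu => ?_⟩
    · simpa only [pontryaginPair_zero_left] using h (0, φ) R.zero_mem
    · simpa only [pontryaginPair_zero_right] using h (u, 0) hu
  · rintro ⟨hp₁, hp₂⟩ n hn
    simp [pontryaginPair_apply, hp₁, hp₂ n.1 hn]

end Pontryagin

/-- If `D` is Lagrangian and `R ⊆ V` a subspace, then
`(D ∩ (R × V*))^⊥ = D + ({0} × R°)`. -/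
theorem orthogonal_inf_prod_top {V : Type*} [AddCommGroup V] [Module ℝ V]
    [FiniteDimensional ℝ V] (D : Submodule ℝ (V × Module.Dual ℝ V))
    (hD : LinearMap.BilinForm.orthogonal (pontryaginPair V) D = D) (R : Submodule ℝ V) :
    LinearMap.BilinForm.orthogonal (pontryaginPair V)
        (D ⊓ R.prod (⊤ : Submodule ℝ (Module.Dual ℝ V)))
      = D ⊔ (⊥ : Submodule ℝ V).prod R.dualAnnihilator := by
  rw [LinearMap.BilinForm.orthogonal_inf pontryaginPair_nondegenerate
    pontryaginPair_isSymm.isRefl, hD, pontryaginPair_orthogonal_prod_top]
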